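/- Assume λ_k(𝐊*) − λ_{k+1}(𝐊*) > 0 and set c' = k/n + 2√2/(λ_k(𝐊*) − λ_{k+1}(𝐊*)). Then for every weight vector w ∈ ℝ^m, with w̃_t = m·w_t, the quantity (1/m)( Σ_{t=1}^m ‖w̃_t 𝐊^{(t)} − 𝐊*‖_F² − Σ_{t=1}^m ‖w̃_t 𝐊^{(t)} − 𝐊^w‖_F² ) is nonnegative (it equals ‖𝐊^w − 𝐊*‖_F²), and the Bias–Diversity bound holds: F̂_k(𝐊^w) − F̂_k(𝐊*) ≤ c'·√( (1/m)( Σ_{t=1}^m ‖w̃_t 𝐊^{(t)} − 𝐊*‖_F² − Σ_{t=1}^m ‖w̃_t 𝐊^{(t)} − 𝐊^w‖_F² ) ). -/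
import Mathlib


open Matrix

/-- Eigenvalues of a real symmetric matrix in nonincreasing order; `0` if not Hermitian. -/
noncomputable def eigs {n : ℕ} (M : Matrix (Fin n) (Fin n) ℝ) : Fin n → ℝ :=
  if h : M.IsHermitian then fun i => (h.eigenvalues ∘ Tuple.sort h.eigenvalues) i.rev
  else 0

/-- Frobenius norm. -/
noncomputable def frobNorm {n m : ℕ} (A : Matrix (Fin n) (Fin m) ℝ) : ℝ :=
  Real.sqrt (∑ i, ∑ j, (A i j) ^ 2)

/-- `F̂_k(M) = (1/n) max { tr(Zᵀ M Z) : Z ∈ ℝ^{n×k}, ZᵀZ = I_k }`. -/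
noncomputable def Fhat {n : ℕ} (k : ℕ) (M : Matrix (Fin n) (Fin n) ℝ) : ℝ :=
  (1 / (n : ℝ)) * sSup {x : ℝ | ∃ Z : Matrix (Fin n) (Fin k) ℝ,
    Zᵀ * Z = 1 ∧ x = (Zᵀ * M * Z).trace}

lemma frob_nonneg' {n m : ℕ} (A : Matrix (Fin n) (Fin m) ℝ) : 0 ≤ frobNorm A :=
  Real.sqrt_nonneg _

lemma frob_sq' {n m : ℕ} (A : Matrix (Fin n) (Fin m) ℝ) :
    frobNorm A ^ 2 = ∑ i, ∑ j, (A i j) ^ 2 :=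
  Real.sq_sqrt (by positivity)

lemma trace_bound' {n k : ℕ} (M : Matrix (Fin n) (Fin n) ℝ)
    (Z : Matrix (Fin n) (Fin k) ℝ) (hZ : Zᵀ * Z = 1) :
    (Zᵀ * M * Z).trace ≤ (k : ℝ) * frobNorm M := by
  set P := Z * Zᵀ with hP
  have hPsym : Pᵀ = P := by rw [hP, transpose_mul, transpose_transpose]
  have hsymE : ∀ i j, P j i = P i j := fun i j => by
    have := congrFun (congrFun hPsym i) j
    simpa [Matrix.transpose_apply] using this
  have hPP : P * P = P := by
    rw [hP, Matrix.mul_assoc, ← Matrix.mul_assoc Zᵀ Z Zᵀ, hZ, Matrix.one_mul]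
  have htrP : P.trace = (k : ℝ) := by
    rw [hP, Matrix.trace_mul_comm, hZ, Matrix.trace_one]; simp
  have h1 : (Zᵀ * M * Z).trace = ∑ p : Fin n × Fin n, P p.1 p.2 * M p.2 p.1 := by
    rw [Matrix.trace_mul_comm, ← Matrix.mul_assoc, ← hP, Fintype.sum_prod_type]
    simp [Matrix.trace, Matrix.diag, Matrix.mul_apply]
  have hPsq : ∑ p : Fin n × Fin n, P p.1 p.2 ^ 2 = (k : ℝ) := by
    rw [← htrP]
    conv_rhs => rw [← hPP]
    rw [Fintype.sum_prod_type]
    simp only [Matrix.trace, Matrix.diag, Matrix.mul_apply, sq]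
    refine Finset.sum_congr rfl fun i _ => Finset.sum_congr rfl fun j _ => ?_
    rw [hsymE j i]
  have hMsq : ∑ p : Fin n × Fin n, M p.2 p.1 ^ 2 = frobNorm M ^ 2 := by
    rw [frob_sq', Fintype.sum_prod_type, Finset.sum_comm]
  calc (Zᵀ * M * Z).trace
      ≤ Real.sqrt (∑ p : Fin n × Fin n, P p.1 p.2 ^ 2) *
        Real.sqrt (∑ p : Fin n × Fin n, M p.2 p.1 ^ 2) := by
        rw [h1]
        exact Real.sum_mul_le_sqrt_mul_sqrt _ _ _
    _ = Real.sqrt (k : ℝ) * frobNorm M := by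
        rw [hPsq, hMsq, Real.sqrt_sq (frob_nonneg' M)]
    _ ≤ (k : ℝ) * frobNorm M := by
        refine mul_le_mul_of_nonneg_right ?_ (frob_nonneg' M)
        rcases Nat.eq_zero_or_pos k with h | h
        · simp [h]
        · have h1 : (1:ℝ) ≤ k := by exact_mod_cast h
          calc Real.sqrt (k:ℝ) ≤ Real.sqrt ((k:ℝ)^2) := Real.sqrt_le_sqrt (by nlinarith)
          _ = k := Real.sqrt_sq (by positivity)

lemma exists_iso' {n k : ℕ} (hkn : k ≤ n) :
    ∃ Z : Matrix (Fin n) (Fin k) ℝ, Zᵀ * Z = 1 := by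
  refine ⟨Matrix.of fun i j => if i = Fin.castLE hkn j then 1 else 0, ?_⟩
  ext i j
  simp only [Matrix.mul_apply, Matrix.transpose_apply, Matrix.of_apply]
  simp only [ite_mul, one_mul, zero_mul, mul_ite, mul_one, mul_zero]
  rw [Finset.sum_ite_eq' Finset.univ (Fin.castLE hkn j)]
  simp only [Finset.mem_univ, if_true]
  by_cases h : i = j
  · subst h; simp [Matrix.one_apply]
  · have : ¬ (Fin.castLE hkn i = Fin.castLE hkn j) := fun hc => h (Fin.castLE_injective hkn hc)
    simp only [Matrix.one_apply, h, this, if_false]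
    rw [if_neg (fun hc => this hc.symm)]

/-- The feasible-value set for `Fhat`. -/
def Sset {n : ℕ} (k : ℕ) (M : Matrix (Fin n) (Fin n) ℝ) : Set ℝ :=
  {x : ℝ | ∃ Z : Matrix (Fin n) (Fin k) ℝ, Zᵀ * Z = 1 ∧ x = (Zᵀ * M * Z).trace}

lemma Sset_nonempty {n k : ℕ} (hkn : k ≤ n) (M : Matrix (Fin n) (Fin n) ℝ) :
    (Sset k M).Nonempty := by
  obtain ⟨Z, hZ⟩ := exists_iso' (n := n) (k := k) hkn
  exact ⟨(Zᵀ * M * Z).trace, Z, hZ, rfl⟩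

lemma Sset_bddAbove {n k : ℕ} (M : Matrix (Fin n) (Fin n) ℝ) :
    BddAbove (Sset k M) := by
  refine ⟨(k : ℝ) * frobNorm M, fun x hx => ?_⟩
  obtain ⟨Z, hZ, rfl⟩ := hx
  exact trace_bound' M Z hZ

lemma Fhat_diff_le {n k : ℕ} (hkn : k ≤ n) (A B : Matrix (Fin n) (Fin n) ℝ) :
    Fhat k A - Fhat k B ≤ ((k : ℝ) / n) * frobNorm (A - B) := by
  have hsup : sSup (Sset k A) ≤ sSup (Sset k B) + (k : ℝ) * frobNorm (A - B) := by
    refine csSup_le (Sset_nonempty hkn A) fun x hx => ?_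
    obtain ⟨Z, hZ, rfl⟩ := hx
    have hdecomp : (Zᵀ * A * Z).trace = (Zᵀ * B * Z).trace + (Zᵀ * (A - B) * Z).trace := by
      rw [← Matrix.trace_add]
      congr 1
      rw [Matrix.mul_sub, Matrix.sub_mul]
      abel
    rw [hdecomp]
    have h1 : (Zᵀ * B * Z).trace ≤ sSup (Sset k B) :=
      le_csSup (Sset_bddAbove B) ⟨Z, hZ, rfl⟩
    have h2 := trace_bound' (A - B) Z hZ
    linarith
  have hn : (0 : ℝ) ≤ 1 / (n : ℝ) := by positivity
  have : Fhat k A ≤ Fhat k B + (1 / (n : ℝ)) * ((k : ℝ) * frobNorm (A - B)) := by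
    unfold Fhat
    rw [← mul_add]
    exact mul_le_mul_of_nonneg_left hsup hn
  calc Fhat k A - Fhat k B ≤ (1 / (n : ℝ)) * ((k : ℝ) * frobNorm (A - B)) := by linarith
    _ = ((k : ℝ) / n) * frobNorm (A - B) := by ring

/-- **Bias–Diversity bound.** Let `𝐊^{(1)},…,𝐊^{(m)}` be symmetric matrices,
`𝐊*` symmetric with eigenvalues in `[0,1]`, `λ_k(𝐊*) − λ_{k+1}(𝐊*) > 0`, and
`c' = k/n + 2√2/(λ_k(𝐊*) − λ_{k+1}(𝐊*))`. Then for every `w ∈ ℝ^m`, with `w̃_t = m w_t` and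
`𝐊^w = Σ_t w_t 𝐊^{(t)}`, the quantity
`D = (1/m)(Σ_t ‖w̃_t 𝐊^{(t)} − 𝐊*‖_F² − Σ_t ‖w̃_t 𝐊^{(t)} − 𝐊^w‖_F²)` is nonnegative
(it equals `‖𝐊^w − 𝐊*‖_F²`), and `F̂_k(𝐊^w) − F̂_k(𝐊*) ≤ c' √D`. -/
theorem stmt3 {n m : ℕ} (k : ℕ) (hm : 0 < m) (hk0 : 0 < k) (hkn : k < n)
    (K : Fin m → Matrix (Fin n) (Fin n) ℝ) (hKsym : ∀ t, (K t).IsHermitian)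
    (Kstar : Matrix (Fin n) (Fin n) ℝ) (hKs : Kstar.IsHermitian)
    (heig : ∀ i, eigs Kstar i ∈ Set.Icc (0 : ℝ) 1)
    (hgap : 0 < eigs Kstar ⟨k - 1, by omega⟩ - eigs Kstar ⟨k, hkn⟩)
    (w : Fin m → ℝ) (D : ℝ)
    (hD : D = (1 / (m : ℝ)) *
      ((∑ t, frobNorm (((m : ℝ) * w t) • K t - Kstar) ^ 2)
        - ∑ t, frobNorm (((m : ℝ) * w t) • K t - ∑ s, w s • K s) ^ 2)) :
    (D = frobNorm ((∑ t, w t • K t) - Kstar) ^ 2 ∧ 0 ≤ D) ∧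
    Fhat k (∑ t, w t • K t) - Fhat k Kstar ≤
      ((k : ℝ) / (n : ℝ) +
        2 * Real.sqrt 2 / (eigs Kstar ⟨k - 1, by omega⟩ - eigs Kstar ⟨k, hkn⟩)) *
      Real.sqrt D := by
  have hmR : (0 : ℝ) < m := by exact_mod_cast hm
  -- Part 1 : D = ‖K^w − K*‖_F²
  have key : ∀ i j : Fin n,
      (∑ t, (((m : ℝ) * w t) • K t - Kstar) i j ^ 2)
        - (∑ t, (((m : ℝ) * w t) • K t - ∑ s, w s • K s) i j ^ 2)
      = (m : ℝ) * (((∑ t, w t • K t) - Kstar) i j ^ 2) := by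
    intro i j
    set a : ℝ := ∑ s, w s * K s i j with ha
    have hav : (∑ s, w s • K s) i j = a := by
      simp [Matrix.sum_apply, Matrix.smul_apply, smul_eq_mul, ha]
    have hsum : ∑ t, ((m : ℝ) * w t) * K t i j = (m : ℝ) * a := by
      rw [ha, Finset.mul_sum]
      exact Finset.sum_congr rfl fun t _ => by ring
    simp only [Matrix.sub_apply, Matrix.smul_apply, smul_eq_mul, hav, Matrix.sum_apply]
    rw [← Finset.sum_sub_distrib]
    have hterm : ∀ t : Fin m,
        ((m : ℝ) * w t * K t i j - Kstar i j) ^ 2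
          - ((m : ℝ) * w t * K t i j - a) ^ 2
        = 2 * ((m : ℝ) * w t * K t i j) * (a - Kstar i j)
          + (Kstar i j ^ 2 - a ^ 2) := fun t => by ring
    rw [Finset.sum_congr rfl fun t _ => hterm t, Finset.sum_add_distrib,
      Finset.sum_const, ← Finset.sum_mul, ← Finset.mul_sum]
    rw [hsum]
    simp only [Finset.card_univ, Fintype.card_fin, nsmul_eq_mul]
    ring
  have hDeq : D = frobNorm ((∑ t, w t • K t) - Kstar) ^ 2 := by
    have swap1 : ∀ (f : Fin m → Fin n → Fin n → ℝ),
        (∑ t, ∑ i, ∑ j, f t i j) = ∑ i, ∑ j, ∑ t, f t i j := fun f => by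
      rw [Finset.sum_comm]
      exact Finset.sum_congr rfl fun i _ => Finset.sum_comm
    have hmain : (∑ t, ∑ i, ∑ j, (((m : ℝ) * w t) • K t - Kstar) i j ^ 2)
        - (∑ t, ∑ i, ∑ j, (((m : ℝ) * w t) • K t - ∑ s, w s • K s) i j ^ 2)
        = (m : ℝ) * ∑ i, ∑ j, (((∑ t, w t • K t) - Kstar) i j ^ 2) := by
      rw [swap1, swap1, ← Finset.sum_sub_distrib, Finset.mul_sum]
      refine Finset.sum_congr rfl fun i _ => ?_
      rw [← Finset.sum_sub_distrib, Finset.mul_sum]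
      exact Finset.sum_congr rfl fun j _ => key i j
    rw [hD, frob_sq']
    simp only [frob_sq']
    rw [hmain, ← mul_assoc, one_div_mul_cancel (ne_of_gt hmR), one_mul]
  have hD0 : 0 ≤ D := hDeq ▸ sq_nonneg _
  refine ⟨⟨hDeq, hD0⟩, ?_⟩
  -- Part 2
  have hsq : Real.sqrt D = frobNorm ((∑ t, w t • K t) - Kstar) := by
    rw [hDeq, Real.sqrt_sq (frob_nonneg' _)]
  have hmain := Fhat_diff_le (le_of_lt hkn) (∑ t, w t • K t) Kstar
  have hextra : 0 ≤ 2 * Real.sqrt 2 / (eigs Kstar ⟨k - 1, by omega⟩ - eigs Kstar ⟨k, hkn⟩) := by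
    apply div_nonneg _ (le_of_lt hgap)
    positivity
  have hsqrtD : 0 ≤ Real.sqrt D := Real.sqrt_nonneg _
  calc Fhat k (∑ t, w t • K t) - Fhat k Kstar
      ≤ ((k : ℝ) / n) * frobNorm ((∑ t, w t • K t) - Kstar) := hmain
    _ = ((k : ℝ) / n) * Real.sqrt D := by rw [hsq]
    _ ≤ ((k : ℝ) / (n : ℝ) +
        2 * Real.sqrt 2 / (eigs Kstar ⟨k - 1, by omega⟩ - eigs Kstar ⟨k, hkn⟩)) *
        Real.sqrt D := by
        apply mul_le_mul_of_nonneg_right _ hsqrtD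
        linarith
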